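/- Let T be a tree, let w : V(T) → ℕ, let t ≥ 1 be a real number, and let ε be a real number with 0 < ε ≤ 1/3 such that w(u) ≥ t/ε for every vertex u of T. Define w⁻(u) = ⌊w(u)/t⌋ and w⁺(u) = ⌈w(u)/t⌉ for every vertex u. Then for every nonempty connected w-safe set S in T there is a nonempty connected (w⁻,w⁺)-safe set S′ in T with S ⊆ S′ and w⁻(S′) ≤ (1 + 3ε)·w⁻(S) + max{w⁻(u) : u ∈ V(T)}. -/

import Mathlib

/-- Total weight of a set of vertices. -/
noncomputable def setWeight {V : Type*} (w : V → ℕ) (A : Set V) : ℕ := ∑ᶠ u ∈ A, w u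

/-- `C` is the vertex set of a connected component of the subgraph of `G` induced by `S`. -/
def IsCompOf {V : Type*} (G : SimpleGraph V) (S C : Set V) : Prop :=
  C ⊆ S ∧ (G.induce C).Connected ∧ ∀ u ∈ C, ∀ v ∈ S, G.Adj u v → v ∈ C

/-- `S` is a (nonempty) `(w⁻,w⁺)`-safe set of `G`: every component `D` of `G - S` adjacent to
a component `C` of `G[S]` satisfies `w⁺(D) ≤ w⁻(C)`. -/
def IsSafePair {V : Type*} (G : SimpleGraph V) (wm wp : V → ℕ) (S : Set V) : Prop :=
  S.Nonempty ∧ ∀ C D : Set V, IsCompOf G S C → IsCompOf G Sᶜ D →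
    (∃ u ∈ C, ∃ v ∈ D, G.Adj u v) → setWeight wp D ≤ setWeight wm C

/-- `S` is a (nonempty) `w`-safe set of `G`. -/
def IsSafeSet {V : Type*} (G : SimpleGraph V) (w : V → ℕ) (S : Set V) : Prop :=
  IsSafePair G w w S

/-!
Grow `S` greedily: as long as the current connected superset `S'` is not `(w⁻,w⁺)`-safe, the
unique component `C = S'` of `G[S']` has a neighbouring component `D` of `G - S'` with
`w⁻(S') < w⁺(D)`; add to `S'` the vertex of `D` adjacent to `S'`. Since `D` lies in a component
`D₀` of `G - S` adjacent to `S`, safety of `S` gives `w⁺(D) ≤ (1 + ε) w(D₀) / t ≤ (1 + ε) w(S) / t`,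
so after the step `w⁻(S') ≤ (1 + ε) w(S) / t + max w⁻`. Finally, rounding changes `w(u) / t` by at
most `1 ≤ ε w(u) / t`, whence `w⁻(S) ≥ (1 - ε) w(S) / t`, and `1 + ε ≤ (1 + 3ε)(1 - ε)` for
`ε ≤ 1/3`.
-/

open SimpleGraph

section Weight

variable {V : Type*} [Finite V] (w : V → ℕ)

lemma setWeight_eq_sum (A : Set V) : setWeight w A = ∑ u ∈ A.toFinite.toFinset, w u := by
  rw [setWeight, ← finsum_mem_coe_finset, Set.Finite.coe_toFinset]

lemma setWeight_mono {A B : Set V} (h : A ⊆ B) : setWeight w A ≤ setWeight w B := by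
  rw [setWeight_eq_sum, setWeight_eq_sum]
  exact Finset.sum_le_sum_of_subset (by simpa using h)

lemma setWeight_insert {A : Set V} {v : V} (hv : v ∉ A) :
    setWeight w (insert v A) = w v + setWeight w A :=
  finsum_mem_insert w hv A.toFinite

lemma mul_setWeight_le_mul_setWeight {w' : V → ℕ} {a b : ℝ} (h : ∀ u, a * w u ≤ b * w' u)
    (A : Set V) : a * setWeight w A ≤ b * setWeight w' A := by
  simp only [setWeight_eq_sum, Nat.cast_sum, Finset.mul_sum]
  exact Finset.sum_le_sum fun u _ => h u

end Weight

section Components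

variable {V : Type*} (G : SimpleGraph V)

lemma connected_induce_insert {A : Set V} (hA : (G.induce A).Connected) {u v : V} (hu : u ∈ A)
    (huv : G.Adj u v) : (G.induce (insert v A)).Connected := by
  rw [← Set.singleton_union]
  exact G.connected_induce_union Preconnected.of_subsingleton hA.preconnected rfl hu huv.symm

variable {G}

lemma IsCompOf.mem_of_reachable {A C : Set V} (hC : IsCompOf G A C) {x y : A}
    (hxy : (G.induce A).Reachable x y) (hx : x.1 ∈ C) : y.1 ∈ C := by
  by_contra hy
  obtain ⟨p⟩ := hxy
  obtain ⟨d, -, hd, hd'⟩ := p.exists_boundary_dart {z | z.1 ∈ C} hx hy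
  exact hd' (hC.2.2 _ hd _ d.snd.2 d.adj)

lemma IsCompOf.eq_of_connected {S C : Set V} (hC : IsCompOf G S C)
    (hS : (G.induce S).Connected) : C = S := by
  obtain ⟨⟨c, hc⟩⟩ := hC.2.1.nonempty
  exact hC.1.antisymm fun y hy => hC.mem_of_reachable (hS.preconnected ⟨c, hC.1 hc⟩ ⟨y, hy⟩) hc

lemma exists_isCompOf_superset [Finite V] {A D : Set V} (hDA : D ⊆ A)
    (hD : (G.induce D).Connected) : ∃ D₀, D ⊆ D₀ ∧ IsCompOf G A D₀ := by
  obtain ⟨D₀, hDD₀, ⟨hD₀A, hD₀⟩, hmax⟩ :=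
    Finite.exists_le_maximal (p := fun X : Set V => X ⊆ A ∧ (G.induce X).Connected) ⟨hDA, hD⟩
  refine ⟨D₀, hDD₀, hD₀A, hD₀, fun u hu v hv huv => ?_⟩
  exact hmax ⟨Set.insert_subset hv hD₀A, connected_induce_insert G hD₀ hu huv⟩
    (Set.subset_insert v D₀) (Set.mem_insert v D₀)

lemma IsCompOf.exists_adj_of_reachable {S D : Set V} (hD : IsCompOf G Sᶜ D) {v s : V}
    (hv : v ∈ D) (hs : s ∈ S) (hvs : G.Reachable v s) : ∃ a ∈ S, ∃ b ∈ D, G.Adj a b := by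
  obtain ⟨p⟩ := hvs
  obtain ⟨d, -, hd, hd'⟩ := p.exists_boundary_dart D hv fun h => hD.1 h hs
  refine ⟨d.snd, ?_, d.fst, hd, d.adj.symm⟩
  by_contra h
  exact hd' (hD.2.2 _ hd _ h d.adj)

end Components

section Safe

variable {V : Type*} [Finite V] {G : SimpleGraph V} {wm wp : V → ℕ}

/-- The component `D` of `G - S'` lies in a component of `G - S`, which is next to `S` because
it is reachable from `S` through `S'`. -/
lemma IsSafePair.setWeight_le_of_superset {S S' D : Set V} (hsafe : IsSafePair G wm wp S)
    (hS : (G.induce S).Connected) (hSS' : S ⊆ S') (hS' : (G.induce S').Connected)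
    (hD : IsCompOf G S'ᶜ D) {a b : V} (ha : a ∈ S') (hb : b ∈ D) (hab : G.Adj a b) :
    setWeight wp D ≤ setWeight wm S := by
  obtain ⟨D₀, hDD₀, hD₀⟩ :=
    exists_isCompOf_superset (hD.1.trans (Set.compl_subset_compl.mpr hSS')) hD.2.1
  obtain ⟨s, hs⟩ := hsafe.1
  have hbs : G.Reachable b s := hab.symm.reachable.trans
    ((hS'.preconnected ⟨a, ha⟩ ⟨s, hSS' hs⟩).map (Embedding.induce S').toHom)
  obtain ⟨x, hx, y, hy, hxy⟩ := hD₀.exists_adj_of_reachable (hDD₀ hb) hs hbs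
  calc setWeight wp D ≤ setWeight wp D₀ := setWeight_mono wp hDD₀
    _ ≤ setWeight wm S :=
      hsafe.2 S D₀ ⟨subset_rfl, hS, fun _ _ _ hv _ => hv⟩ hD₀ ⟨x, hx, y, hy, hxy⟩

/-- A maximal connected superset of `S` of `w⁻`-weight at most `β` works: were it not safe,
`hstep` would let it grow by the neighbour `b` of a heavy component `D`. -/
lemma exists_isSafePair_superset_of_le {S : Set V} (hS : S.Nonempty)
    (hconn : (G.induce S).Connected) {β : ℝ} (hSβ : (setWeight wm S : ℝ) ≤ β)
    (hstep : ∀ S' D, S ⊆ S' → (G.induce S').Connected → IsCompOf G S'ᶜ D →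
      ∀ a ∈ S', ∀ b ∈ D, G.Adj a b → (wm b + setWeight wp D : ℝ) ≤ β) :
    ∃ S', S ⊆ S' ∧ IsSafePair G wm wp S' ∧ (G.induce S').Connected ∧
      (setWeight wm S' : ℝ) ≤ β := by
  obtain ⟨S', hSS', ⟨hS', hS'β⟩, hmax⟩ := Finite.exists_le_maximal
    (p := fun X : Set V => (G.induce X).Connected ∧ (setWeight wm X : ℝ) ≤ β) ⟨hconn, hSβ⟩
  refine ⟨S', hSS', ⟨hS.mono hSS', fun C D hC hD hCD => ?_⟩, hS', hS'β⟩
  rw [hC.eq_of_connected hS'] at hCD ⊢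
  obtain ⟨a, ha, b, hb, hab⟩ := hCD
  by_contra! hlt
  have hbS' : b ∉ S' := hD.1 hb
  refine hbS' (hmax ⟨connected_induce_insert G hS' ha hab, ?_⟩ (Set.subset_insert b S')
    (Set.mem_insert b S'))
  have hlt' : (setWeight wm S' : ℝ) < setWeight wp D := by exact_mod_cast hlt
  rw [setWeight_insert wm hbS']
  push_cast
  linarith [hstep S' D hSS' hS' hD a ha b hb hab]

end Safe

section Rounding

variable {t ε x : ℝ}

lemma one_le_mul_div_of_div_le (ht : 0 < t) (hε : 0 < ε) (hx : t / ε ≤ x) : 1 ≤ ε * x / t := by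
  rw [le_div_iff₀ ht, one_mul, mul_comm]
  exact (div_le_iff₀ hε).mp hx

lemma natCeil_div_le_one_add_mul (ht : 0 < t) (hε : 0 < ε) (hx : t / ε ≤ x) :
    (⌈x / t⌉₊ : ℝ) ≤ (1 + ε) / t * x := by
  have hx0 : 0 ≤ x / t := div_nonneg ((div_pos ht hε).le.trans hx) ht.le
  have := Nat.ceil_lt_add_one hx0
  have := one_le_mul_div_of_div_le ht hε hx
  calc (⌈x / t⌉₊ : ℝ) ≤ x / t + ε * x / t := by linarith
    _ = (1 + ε) / t * x := by ring

lemma one_sub_mul_le_natFloor_div (ht : 0 < t) (hε : 0 < ε) (hx : t / ε ≤ x) :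
    (1 - ε) / t * x ≤ ⌊x / t⌋₊ := by
  have := Nat.sub_one_lt_floor (x / t)
  have := one_le_mul_div_of_div_le ht hε hx
  calc (1 - ε) / t * x = x / t - ε * x / t := by ring
    _ ≤ ⌊x / t⌋₊ := by linarith

end Rounding

theorem exists_safePair_superset_general {V : Type*} [Fintype V] (G : SimpleGraph V)
    (w : V → ℕ) (t ε : ℝ) (ht : 1 ≤ t) (hε0 : 0 < ε) (hε : ε ≤ 1 / 3)
    (hw : ∀ u : V, t / ε ≤ (w u : ℝ))
    (wm wp : V → ℕ)
    (hwm : ∀ u, wm u = ⌊(w u : ℝ) / t⌋₊) (hwp : ∀ u, wp u = ⌈(w u : ℝ) / t⌉₊)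
    (S : Set V) (hsafe : IsSafeSet G w S) (hconn : (G.induce S).Connected) :
    ∃ S' : Set V, S ⊆ S' ∧ IsSafePair G wm wp S' ∧ (G.induce S').Connected ∧
      (setWeight wm S' : ℝ) ≤ (1 + 3 * ε) * (setWeight wm S : ℝ) + ((⨆ u, wm u : ℕ) : ℝ) := by
  have ht0 : 0 < t := by linarith
  have hwp_le (u : V) : 1 * (wp u : ℝ) ≤ (1 + ε) / t * w u := by
    rw [one_mul, hwp u]; exact natCeil_div_le_one_add_mul ht0 hε0 (hw u)
  have hwm_ge (u : V) : (1 - ε) / t * w u ≤ 1 * (wm u : ℝ) := by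
    rw [one_mul, hwm u]; exact one_sub_mul_le_natFloor_div ht0 hε0 (hw u)
  have h3ε : (1 + ε) / t ≤ (1 + 3 * ε) * ((1 - ε) / t) := by
    rw [← mul_div_assoc]; gcongr; nlinarith
  set M : ℕ := ⨆ u, wm u
  refine exists_isSafePair_superset_of_le hsafe.1 hconn
    (le_add_of_le_of_nonneg (le_mul_of_one_le_left (by positivity) (by linarith)) (by positivity)) ?_
  intro S' D hSS' hS' hD a ha b hb hab
  have hbM : (wm b : ℝ) ≤ M := by exact_mod_cast le_ciSup (Set.finite_range wm).bddAbove b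
  have hDS : (setWeight w D : ℝ) ≤ setWeight w S := by
    exact_mod_cast hsafe.setWeight_le_of_superset hconn hSS' hS' hD ha hb hab
  calc (wm b + setWeight wp D : ℝ)
      ≤ M + (1 + ε) / t * setWeight w D := by
        gcongr; simpa using mul_setWeight_le_mul_setWeight wp hwp_le D
    _ ≤ M + (1 + ε) / t * setWeight w S := by gcongr
    _ ≤ M + (1 + 3 * ε) * ((1 - ε) / t * setWeight w S) := by
        rw [← mul_assoc]; gcongr
    _ ≤ (1 + 3 * ε) * setWeight wm S + M := by
        rw [add_comm]; gcongr; simpa using mul_setWeight_le_mul_setWeight w hwm_ge S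

theorem exists_safePair_superset {V : Type*} [Fintype V] (G : SimpleGraph V)
    (hT : G.IsTree) (w : V → ℕ) (t ε : ℝ) (ht : 1 ≤ t) (hε0 : 0 < ε) (hε : ε ≤ 1 / 3)
    (hw : ∀ u : V, t / ε ≤ (w u : ℝ))
    (wm wp : V → ℕ)
    (hwm : ∀ u, wm u = ⌊(w u : ℝ) / t⌋₊) (hwp : ∀ u, wp u = ⌈(w u : ℝ) / t⌉₊)
    (S : Set V) (hsafe : IsSafeSet G w S) (hconn : (G.induce S).Connected) :
    ∃ S' : Set V, S ⊆ S' ∧ IsSafePair G wm wp S' ∧ (G.induce S').Connected ∧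
      (setWeight wm S' : ℝ) ≤ (1 + 3 * ε) * (setWeight wm S : ℝ) + ((⨆ u, wm u : ℕ) : ℝ) :=
  exists_safePair_superset_general G w t ε ht hε0 hε hw wm wp hwm hwp S hsafe hconn
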